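/- Let U ⊆ ℝ² be a nonempty open connected set. Let β, β' : U → ℝ be positive C¹ functions and let γ̃, γ̃' : U → M₂(ℝ) be C¹ maps whose values are symmetric positive-definite matrices of determinant 1; set γ = βγ̃ and γ' = β'γ̃'. Let u₁, u₂, u₃, u₄ and u'₁, u'₂, u'₃, u'₄ be real-valued C² functions on U, and set H_i := γ∇u_i and H'_i := γ'∇u'_i for i = 1,…,4. Assume: (i) H_i = H'_i on U for i = 1,…,4; (ii) det([H₁(x), H₂(x)]) ≠ 0 for every x ∈ U; (iii) defining on U the functions μ₁ := det([H₃,H₂])/det([H₁,H₂]), μ₂ := det([H₁,H₃])/det([H₁,H₂]), λ₁ := det([H₄,H₂])/det([H₁,H₂]), λ₂ := det([H₁,H₄])/det([H₁,H₂]), the matrices Z₁ := [∇μ₁, ∇μ₂], Z₂ := [∇λ₁, ∇λ₂], and M_k := (Z_k [H₁,H₂]ᵀ J)^sym for k = 1,2, the symmetric matrices M₁(x) and M₂(x) are linearly independent for every x ∈ U; (iv) β(x₀) = β'(x₀) for some x₀ ∈ U. Then γ̃ = γ̃' and β = β' on U, so γ = γ' on U. -/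

import Mathlib

open Matrix

noncomputable def grad (u : (Fin 2 → ℝ) → ℝ) (x : Fin 2 → ℝ) : Fin 2 → ℝ :=
  fun i => fderiv ℝ u x (Pi.single i 1)

def col2 (a b : Fin 2 → ℝ) : Matrix (Fin 2) (Fin 2) ℝ :=
  Matrix.of fun i => ![a i, b i]

/-- The rotation matrix `J = e₂⊗e₁ − e₁⊗e₂`, i.e. `Jv = (−v₂, v₁)`. -/
def J2 : Matrix (Fin 2) (Fin 2) ℝ := !![0, -1; 1, 0]

noncomputable def symPart (A : Matrix (Fin 2) (Fin 2) ℝ) : Matrix (Fin 2) (Fin 2) ℝ :=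
  (2 : ℝ)⁻¹ • (A + Aᵀ)

/-- The constraint matrix `M = (Z[H₁,H₂]ᵀJ)^sym` at `x`, built from current densities
`H₁, H₂` and a further one `Ha` via the Cramer's rule coefficients
`μ₁ = det(Ha,H₂)/det(H₁,H₂)`, `μ₂ = det(H₁,Ha)/det(H₁,H₂)` (with `Ha = H₃` or `H₄`)
and `Z = [∇μ₁, ∇μ₂]`. -/
noncomputable def constraintMat (H₁ H₂ Ha : (Fin 2 → ℝ) → Fin 2 → ℝ) (x : Fin 2 → ℝ) :
    Matrix (Fin 2) (Fin 2) ℝ :=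
  symPart
    (col2
      (grad (fun y => (col2 (Ha y) (H₂ y)).det / (col2 (H₁ y) (H₂ y)).det) x)
      (grad (fun y => (col2 (H₁ y) (Ha y)).det / (col2 (H₁ y) (H₂ y)).det) x)
      * (col2 (H₁ x) (H₂ x))ᵀ * J2)

/-!
For `w = u₃, u₄`, Cramer's rule gives `∇w = μ₁ ∇u₁ + μ₂ ∇u₂`, and since `Hᵢ = βγ̃∇uᵢ` these are
the coefficients built from the currents in the definition of `M`. Taking the curl gives
`det[∇μ₁, ∇u₁] + det[∇μ₂, ∇u₂] = 0`, and because `γ̃ᵀ J γ̃ = (det γ̃) J = J` this is exactly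
`⟨γ̃, M⟩ = 0`. So `γ̃` and `γ̃'` are orthogonal to `M₁` and `M₂` in the 3-dimensional space of
symmetric matrices, hence both are multiples of the cross product of `M₁` and `M₂`; `det = 1` and
positivity force the same multiple. Once `γ̃ = γ̃'`, the data give `∇u'ᵢ = (β/β') ∇uᵢ`; taking
curls, `∇(β/β')` has zero determinant against both `∇u₁` and `∇u₂`, so it vanishes and `β/β'` is
constant on the connected set `U`.
-/

open Filter Topology

lemma det_col2 (a b : Fin 2 → ℝ) : (col2 a b).det = a 0 * b 1 - a 1 * b 0 := by
  simp [col2, det_fin_two, mul_comm]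

lemma col2_mulVec (K : Matrix (Fin 2) (Fin 2) ℝ) (a b : Fin 2 → ℝ) :
    col2 (K *ᵥ a) (K *ᵥ b) = K * col2 a b := by
  ext i j
  fin_cases j <;> simp [col2, mulVec, dotProduct, mul_apply, Fin.sum_univ_two]

lemma det_col2_mulVec (K : Matrix (Fin 2) (Fin 2) ℝ) (a b : Fin 2 → ℝ) :
    (col2 (K *ᵥ a) (K *ᵥ b)).det = K.det * (col2 a b).det := by
  rw [col2_mulVec, det_mul]

lemma det_col2_mulVec_div_det_col2_mulVec {K : Matrix (Fin 2) (Fin 2) ℝ} (hK : K.det ≠ 0)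
    (a b c d : Fin 2 → ℝ) :
    (col2 (K *ᵥ a) (K *ᵥ b)).det / (col2 (K *ᵥ c) (K *ᵥ d)).det
      = (col2 a b).det / (col2 c d).det := by
  rw [det_col2_mulVec, det_col2_mulVec, mul_div_mul_left _ _ hK]

lemma smul_eq_smul_of_smul_mulVec_eq {n : Type*} [Fintype n] [DecidableEq n]
    {g : Matrix n n ℝ} (hg : g.det ≠ 0) {b b' : ℝ} {a a' : n → ℝ}
    (h : (b • g) *ᵥ a = (b' • g) *ᵥ a') : b • a = b' • a' := by
  apply mulVec_injective_of_det_ne_zero hg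
  simpa only [mulVec_smul, smul_mulVec] using h

lemma det_col2_swap (a b : Fin 2 → ℝ) : (col2 b a).det = -(col2 a b).det := by
  simp only [det_col2]; ring

lemma eq_cramer_col2 {a b : Fin 2 → ℝ} (hab : (col2 a b).det ≠ 0) (v : Fin 2 → ℝ) :
    v = ((col2 v b).det / (col2 a b).det) • a + ((col2 a v).det / (col2 a b).det) • b := by
  ext i
  rw [Pi.add_apply, Pi.smul_apply, Pi.smul_apply, smul_eq_mul, smul_eq_mul, div_mul_eq_mul_div,
    div_mul_eq_mul_div, ← add_div, eq_div_iff hab]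
  simp only [det_col2]
  fin_cases i <;> simp only [Fin.zero_eta, Fin.mk_one] <;> ring

lemma eq_zero_of_det_col2_eq_zero {a b p : Fin 2 → ℝ} (hab : (col2 a b).det ≠ 0)
    (hpa : (col2 p a).det = 0) (hpb : (col2 p b).det = 0) : p = 0 := by
  have hap : (col2 a p).det = 0 := by rw [det_col2_swap, hpa, neg_zero]
  rw [eq_cramer_col2 hab p, hpb, hap]
  simp

lemma isSymm_symPart (A : Matrix (Fin 2) (Fin 2) ℝ) : (symPart A).IsSymm := by
  simp [IsSymm, symPart, add_comm]

lemma trace_transpose_mul_symPart {g : Matrix (Fin 2) (Fin 2) ℝ} (hg : g.IsSymm)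
    (hdet : g.det = 1) (b : ℝ) (p q a₁ a₂ : Fin 2 → ℝ) :
    (gᵀ * symPart (col2 p q * (b • g * col2 a₁ a₂)ᵀ * J2)).trace
      = b * ((col2 p a₁).det + (col2 q a₂).det) := by
  have h10 : g 1 0 = g 0 1 := hg.apply 0 1
  rw [det_fin_two, h10] at hdet
  rw [det_col2, det_col2]
  simp only [trace_fin_two, symPart, J2, col2, mul_apply, Fin.sum_univ_two, transpose_apply,
    Matrix.smul_apply, Matrix.add_apply, of_apply, cons_val_zero, cons_val_one, cons_val_fin_one,
    cons_val', smul_eq_mul, h10]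
  linear_combination b * (p 0 * a₁ 1 - p 1 * a₁ 0 + (q 0 * a₂ 1 - q 1 * a₂ 0)) * hdet

lemma exists_eq_smul_cross_of_dotProduct_eq_zero {K : Type*} [Field K] {m n a : Fin 3 → K}
    (hmn : LinearIndependent K ![m, n]) (ham : a ⬝ᵥ m = 0) (han : a ⬝ᵥ n = 0) :
    ∃ c : K, a = c • m ⨯₃ n := by
  have hw : m ⨯₃ n ≠ 0 := crossProduct_ne_zero_iff_linearIndependent.mpr hmn
  have hcross : a ⨯₃ (m ⨯₃ n) = 0 := by
    rw [cross_cross_eq_smul_sub_smul', han, dotProduct_comm, ham, zero_smul, zero_smul, sub_zero]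
  have hdep : ¬LinearIndependent K ![m ⨯₃ n, a] := by
    rw [← crossProduct_ne_zero_iff_linearIndependent, ← cross_anticomm, hcross, neg_zero]
    exact fun h => h rfl
  obtain ⟨c, hc⟩ := not_forall_not.mp ((LinearIndependent.pair_iff' hw).not.mp hdep)
  exact ⟨c, hc.symm⟩

lemma exists_eq_smul_of_dotProduct_eq_zero {K : Type*} [Field K] {m n a b : Fin 3 → K}
    (hmn : LinearIndependent K ![m, n]) (ha : a ≠ 0) (ham : a ⬝ᵥ m = 0) (han : a ⬝ᵥ n = 0)
    (hbm : b ⬝ᵥ m = 0) (hbn : b ⬝ᵥ n = 0) : ∃ t : K, b = t • a := by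
  obtain ⟨c, rfl⟩ := exists_eq_smul_cross_of_dotProduct_eq_zero hmn ham han
  obtain ⟨d, rfl⟩ := exists_eq_smul_cross_of_dotProduct_eq_zero hmn hbm hbn
  have hc : c ≠ 0 := by rintro rfl; exact ha (zero_smul K _)
  exact ⟨d / c, by rw [smul_smul, div_mul_cancel₀ d hc]⟩

lemma Matrix.PosDef.eq_one_of_smul {n : Type*} [Fintype n] [DecidableEq n] [Nonempty n]
    {A : Matrix n n ℝ} {t : ℝ} (hA : A.PosDef) (htA : (t • A).PosDef)
    (hdet : (t • A).det = A.det) : t = 1 := by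
  obtain ⟨i⟩ := ‹Nonempty n›
  have ht : 0 < t := by
    have := htA.diag_pos (i := i)
    rw [Matrix.smul_apply, smul_eq_mul] at this
    exact pos_of_mul_pos_left this (hA.diag_pos (i := i)).le
  rw [det_smul] at hdet
  have hpow : t ^ Fintype.card n = 1 := by
    simpa [hA.det_pos.ne'] using hdet
  exact (pow_eq_one_iff_of_nonneg ht.le Fintype.card_ne_zero).mp hpow

lemma Matrix.PosDef.isSymm {n : Type*} [Fintype n] {A : Matrix n n ℝ} (hA : A.PosDef) :
    A.IsSymm :=
  isHermitian_iff_isSymm.mp hA.isHermitian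

lemma trace_transpose_mul_eq_dotProduct {g : Matrix (Fin 2) (Fin 2) ℝ} (hg : g.IsSymm)
    (M : Matrix (Fin 2) (Fin 2) ℝ) :
    (gᵀ * M).trace = ![g 0 0, g 0 1, g 1 1] ⬝ᵥ ![M 0 0, M 0 1 + M 1 0, M 1 1] := by
  have h10 : g 1 0 = g 0 1 := hg.apply 0 1
  simp only [trace_fin_two, mul_apply, transpose_apply, Fin.sum_univ_two, h10, dotProduct_cons,
    head_cons, tail_cons, dotProduct_of_isEmpty, add_zero]
  ring

lemma linearIndependent_vec3_of_isSymm {M N : Matrix (Fin 2) (Fin 2) ℝ} (hM : M.IsSymm)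
    (hN : N.IsSymm) (hMN : LinearIndependent ℝ ![M, N]) :
    LinearIndependent ℝ
      ![![M 0 0, M 0 1 + M 1 0, M 1 1], ![N 0 0, N 0 1 + N 1 0, N 1 1]] := by
  rw [LinearIndependent.pair_iff] at hMN ⊢
  intro s t hst
  apply hMN s t
  have h0 := congrFun hst 0
  have h1 := congrFun hst 1
  have h2 := congrFun hst 2
  simp only [hM.apply 0 1, hN.apply 0 1, Pi.add_apply, Pi.smul_apply, smul_eq_mul, cons_val_zero,
    cons_val_one, cons_val, Pi.zero_apply] at h0 h1 h2
  ext i j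
  fin_cases i <;> fin_cases j <;>
    simp only [Fin.zero_eta, Fin.mk_one, Matrix.add_apply, Matrix.smul_apply, smul_eq_mul,
      Matrix.zero_apply, hM.apply 0 1, hN.apply 0 1] <;>
    linarith

lemma eq_of_trace_transpose_mul_eq_zero {g g' M N : Matrix (Fin 2) (Fin 2) ℝ}
    (hg : g.PosDef) (hg' : g'.PosDef) (hdet : g.det = g'.det)
    (hM : M.IsSymm) (hN : N.IsSymm) (hMN : LinearIndependent ℝ ![M, N])
    (hgM : (gᵀ * M).trace = 0) (hgN : (gᵀ * N).trace = 0)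
    (hg'M : (g'ᵀ * M).trace = 0) (hg'N : (g'ᵀ * N).trace = 0) : g = g' := by
  have hs := hg.isSymm
  have hs' := hg'.isSymm
  rw [trace_transpose_mul_eq_dotProduct hs] at hgM hgN
  rw [trace_transpose_mul_eq_dotProduct hs'] at hg'M hg'N
  have hne : ![g 0 0, g 0 1, g 1 1] ≠ 0 := fun h =>
    (hg.diag_pos (i := 0)).ne' (by simpa using congrFun h 0)
  obtain ⟨t, ht⟩ := exists_eq_smul_of_dotProduct_eq_zero
    (linearIndependent_vec3_of_isSymm hM hN hMN) hne hgM hgN hg'M hg'N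
  have hg't : g' = t • g := by
    ext i j
    fin_cases i <;> fin_cases j
    · simpa using congrFun ht 0
    · simpa using congrFun ht 1
    · simpa [hs.apply 0 1, hs'.apply 0 1] using congrFun ht 1
    · simpa using congrFun ht 2
  rw [hg't] at hg' hdet ⊢
  rw [hg.eq_one_of_smul hg' hdet.symm, one_smul]

noncomputable def curl (F : (Fin 2 → ℝ) → Fin 2 → ℝ) (x : Fin 2 → ℝ) : ℝ :=
  grad (fun y => F y 1) x 0 - grad (fun y => F y 0) x 1

lemma ContDiffAt.differentiableAt_fderiv {𝕜 E F : Type*} [NontriviallyNormedField 𝕜]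
    [NormedAddCommGroup E] [NormedSpace 𝕜 E] [NormedAddCommGroup F] [NormedSpace 𝕜 F]
    {f : E → F} {x : E} (hf : ContDiffAt 𝕜 2 f x) : DifferentiableAt 𝕜 (fderiv 𝕜 f) x :=
  (hf.fderiv_right (m := 1) (by norm_num)).differentiableAt (by norm_num)

section Calculus

variable {x : Fin 2 → ℝ}

lemma Filter.EventuallyEq.grad_eq {f g : (Fin 2 → ℝ) → ℝ} (h : f =ᶠ[𝓝 x] g) :
    grad f x = grad g x := by
  unfold grad
  rw [h.fderiv_eq]

lemma Filter.EventuallyEq.curl_eq {F G : (Fin 2 → ℝ) → Fin 2 → ℝ} (h : F =ᶠ[𝓝 x] G) :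
    curl F x = curl G x := by
  have h0 : (fun y => F y 0) =ᶠ[𝓝 x] fun y => G y 0 := h.fun_comp (· 0)
  have h1 : (fun y => F y 1) =ᶠ[𝓝 x] fun y => G y 1 := h.fun_comp (· 1)
  rw [curl, curl, h0.grad_eq, h1.grad_eq]

lemma grad_fun_add {f g : (Fin 2 → ℝ) → ℝ} (hf : DifferentiableAt ℝ f x)
    (hg : DifferentiableAt ℝ g x) : grad (fun y => f y + g y) x = grad f x + grad g x := by
  ext i
  simp [grad, fderiv_fun_add hf hg]

lemma grad_fun_mul {f g : (Fin 2 → ℝ) → ℝ} (hf : DifferentiableAt ℝ f x)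
    (hg : DifferentiableAt ℝ g x) :
    grad (fun y => f y * g y) x = f x • grad g x + g x • grad f x := by
  ext i
  simp [grad, fderiv_fun_mul hf hg]

lemma differentiableAt_grad {u : (Fin 2 → ℝ) → ℝ} (hu : ContDiffAt ℝ 2 u x) :
    DifferentiableAt ℝ (grad u) x :=
  differentiableAt_pi.mpr fun _ => hu.differentiableAt_fderiv.clm_apply (differentiableAt_const _)

lemma grad_grad_apply {u : (Fin 2 → ℝ) → ℝ} (hu : ContDiffAt ℝ 2 u x) (i j : Fin 2) :
    grad (fun y => grad u y i) x j = fderiv ℝ (fderiv ℝ u) x (Pi.single j 1) (Pi.single i 1) := by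
  simp [grad, fderiv_clm_apply hu.differentiableAt_fderiv (differentiableAt_const _)]

lemma curl_grad {u : (Fin 2 → ℝ) → ℝ} (hu : ContDiffAt ℝ 2 u x) : curl (grad u) x = 0 := by
  rw [curl, grad_grad_apply hu, grad_grad_apply hu, hu.isSymmSndFDerivAt (by simp), sub_self]

lemma curl_fun_add {F G : (Fin 2 → ℝ) → Fin 2 → ℝ} (hF : DifferentiableAt ℝ F x)
    (hG : DifferentiableAt ℝ G x) : curl (fun y => F y + G y) x = curl F x + curl G x := by
  simp only [curl, Pi.add_apply, grad_fun_add (differentiableAt_pi.mp hF _)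
    (differentiableAt_pi.mp hG _)]
  ring

lemma curl_fun_smul {c : (Fin 2 → ℝ) → ℝ} {F : (Fin 2 → ℝ) → Fin 2 → ℝ}
    (hc : DifferentiableAt ℝ c x) (hF : DifferentiableAt ℝ F x) :
    curl (fun y => c y • F y) x = (col2 (grad c x) (F x)).det + c x * curl F x := by
  rw [curl, curl, det_col2]
  simp only [Pi.smul_apply, smul_eq_mul, grad_fun_mul hc (differentiableAt_pi.mp hF _),
    Pi.add_apply]
  ring

lemma fderiv_eq_zero_of_grad_eq_zero {f : (Fin 2 → ℝ) → ℝ} (h : grad f x = 0) :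
    fderiv ℝ f x = 0 := by
  refine ContinuousLinearMap.coe_injective ((Pi.basisFun ℝ (Fin 2)).ext fun i => ?_)
  simpa [grad] using congrFun h i

lemma det_col2_grad_add_det_col2_grad_eq_zero {w u₁ u₂ μ₁ μ₂ : (Fin 2 → ℝ) → ℝ}
    (hw : ContDiffAt ℝ 2 w x) (hu₁ : ContDiffAt ℝ 2 u₁ x) (hu₂ : ContDiffAt ℝ 2 u₂ x)
    (hμ₁ : DifferentiableAt ℝ μ₁ x) (hμ₂ : DifferentiableAt ℝ μ₂ x)
    (h : grad w =ᶠ[𝓝 x] fun y => μ₁ y • grad u₁ y + μ₂ y • grad u₂ y) :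
    (col2 (grad μ₁ x) (grad u₁ x)).det + (col2 (grad μ₂ x) (grad u₂ x)).det = 0 := by
  have hg₁ := differentiableAt_grad hu₁
  have hg₂ := differentiableAt_grad hu₂
  calc _ = curl (fun y => μ₁ y • grad u₁ y + μ₂ y • grad u₂ y) x := by
        rw [curl_fun_add (hμ₁.fun_smul hg₁) (hμ₂.fun_smul hg₂), curl_fun_smul hμ₁ hg₁,
          curl_fun_smul hμ₂ hg₂, curl_grad hu₁, curl_grad hu₂]
        ring
    _ = curl (grad w) x := h.curl_eq.symm
    _ = 0 := curl_grad hw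

lemma det_col2_grad_eq_zero_of_grad_eq_smul {u v h : (Fin 2 → ℝ) → ℝ}
    (hu : ContDiffAt ℝ 2 u x) (hv : ContDiffAt ℝ 2 v x) (hh : DifferentiableAt ℝ h x)
    (heq : grad v =ᶠ[𝓝 x] fun y => h y • grad u y) :
    (col2 (grad h x) (grad u x)).det = 0 := by
  calc _ = curl (fun y => h y • grad u y) x := by
        rw [curl_fun_smul hh (differentiableAt_grad hu), curl_grad hu, mul_zero, add_zero]
    _ = curl (grad v) x := heq.curl_eq.symm
    _ = 0 := curl_grad hv

lemma DifferentiableAt.det_col2 {a b : (Fin 2 → ℝ) → Fin 2 → ℝ} (ha : DifferentiableAt ℝ a x)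
    (hb : DifferentiableAt ℝ b x) : DifferentiableAt ℝ (fun y => (col2 (a y) (b y)).det) x := by
  simp only [_root_.det_col2]
  have := differentiableAt_pi.mp ha
  have := differentiableAt_pi.mp hb
  fun_prop

end Calculus

lemma trace_transpose_mul_constraintMat_eq_zero {U : Set (Fin 2 → ℝ)} (hU : IsOpen U)
    {β : (Fin 2 → ℝ) → ℝ} {g : (Fin 2 → ℝ) → Matrix (Fin 2) (Fin 2) ℝ}
    (hg : ∀ x ∈ U, (g x).IsSymm) (hgdet : ∀ x ∈ U, (g x).det = 1)
    {u₁ u₂ w : (Fin 2 → ℝ) → ℝ} (hu₁ : ContDiffOn ℝ 2 u₁ U) (hu₂ : ContDiffOn ℝ 2 u₂ U)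
    (hw : ContDiffOn ℝ 2 w U) {H₁ H₂ Hw : (Fin 2 → ℝ) → Fin 2 → ℝ}
    (hH₁ : ∀ x ∈ U, H₁ x = (β x • g x) *ᵥ grad u₁ x)
    (hH₂ : ∀ x ∈ U, H₂ x = (β x • g x) *ᵥ grad u₂ x)
    (hHw : ∀ x ∈ U, Hw x = (β x • g x) *ᵥ grad w x)
    (hdet : ∀ x ∈ U, (col2 (H₁ x) (H₂ x)).det ≠ 0) {x : Fin 2 → ℝ} (hx : x ∈ U) :
    ((g x)ᵀ * constraintMat H₁ H₂ Hw x).trace = 0 := by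
  have hU' : U ∈ 𝓝 x := hU.mem_nhds hx
  have hu₁x := hu₁.contDiffAt hU'
  have hu₂x := hu₂.contDiffAt hU'
  set D : (Fin 2 → ℝ) → ℝ := fun y => (col2 (grad u₁ y) (grad u₂ y)).det
  set μ₁ : (Fin 2 → ℝ) → ℝ := fun y => (col2 (grad w y) (grad u₂ y)).det / D y
  set μ₂ : (Fin 2 → ℝ) → ℝ := fun y => (col2 (grad u₁ y) (grad w y)).det / D y
  have hK : ∀ y ∈ U, (β y • g y).det ≠ 0 ∧ D y ≠ 0 := fun y hy => by
    have := hdet y hy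
    rwa [hH₁ y hy, hH₂ y hy, det_col2_mulVec, mul_ne_zero_iff] at this
  have hμ₁ : (fun y => (col2 (Hw y) (H₂ y)).det / (col2 (H₁ y) (H₂ y)).det) =ᶠ[𝓝 x] μ₁ := by
    filter_upwards [hU'] with y hy
    rw [hH₁ y hy, hH₂ y hy, hHw y hy, det_col2_mulVec_div_det_col2_mulVec (hK y hy).1]
  have hμ₂ : (fun y => (col2 (H₁ y) (Hw y)).det / (col2 (H₁ y) (H₂ y)).det) =ᶠ[𝓝 x] μ₂ := by
    filter_upwards [hU'] with y hy
    rw [hH₁ y hy, hH₂ y hy, hHw y hy, det_col2_mulVec_div_det_col2_mulVec (hK y hy).1]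
  have hD : DifferentiableAt ℝ D x :=
    (differentiableAt_grad hu₁x).det_col2 (differentiableAt_grad hu₂x)
  have hwx := differentiableAt_grad (hw.contDiffAt hU')
  have hcramer : grad w =ᶠ[𝓝 x] fun y => μ₁ y • grad u₁ y + μ₂ y • grad u₂ y := by
    filter_upwards [hU'] with y hy
    exact eq_cramer_col2 (hK y hy).2 _
  have hN₁ := hwx.det_col2 (differentiableAt_grad hu₂x)
  have hN₂ := (differentiableAt_grad hu₁x).det_col2 hwx
  have hDx := (hK x hx).2
  have hcurl := det_col2_grad_add_det_col2_grad_eq_zero (hw.contDiffAt hU') hu₁x hu₂x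
    (by fun_prop (disch := exact hDx)) (by fun_prop (disch := exact hDx)) hcramer
  rw [constraintMat, hμ₁.grad_eq, hμ₂.grad_eq, hH₁ x hx, hH₂ x hx, col2_mulVec,
    trace_transpose_mul_symPart (hg x hx) (hgdet x hx), hcurl, mul_zero]

lemma eqOn_of_smul_grad_eq {U : Set (Fin 2 → ℝ)} (hU : IsOpen U) (hUc : IsPreconnected U)
    {β β' : (Fin 2 → ℝ) → ℝ} (hβ : DifferentiableOn ℝ β U) (hβ' : DifferentiableOn ℝ β' U)
    (hβ'0 : ∀ x ∈ U, β' x ≠ 0) {u₁ u₂ v₁ v₂ : (Fin 2 → ℝ) → ℝ}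
    (hu₁ : ContDiffOn ℝ 2 u₁ U) (hu₂ : ContDiffOn ℝ 2 u₂ U)
    (hv₁ : ContDiffOn ℝ 2 v₁ U) (hv₂ : ContDiffOn ℝ 2 v₂ U)
    (hdet : ∀ x ∈ U, (col2 (grad u₁ x) (grad u₂ x)).det ≠ 0)
    (h₁ : ∀ x ∈ U, β x • grad u₁ x = β' x • grad v₁ x)
    (h₂ : ∀ x ∈ U, β x • grad u₂ x = β' x • grad v₂ x)
    {x₀ : Fin 2 → ℝ} (hx₀ : x₀ ∈ U) (hβx₀ : β x₀ = β' x₀) : Set.EqOn β β' U := by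
  set h : (Fin 2 → ℝ) → ℝ := fun y => β y / β' y with h_def
  have hh : DifferentiableOn ℝ h U := by
    simp only [h_def, div_eq_mul_inv]
    exact hβ.fun_mul (hβ'.fun_inv hβ'0)
  have hgrad : ∀ {u v : (Fin 2 → ℝ) → ℝ}, (∀ x ∈ U, β x • grad u x = β' x • grad v x) →
      ∀ x ∈ U, grad v =ᶠ[𝓝 x] fun y => h y • grad u y := fun huv x hx => by
    filter_upwards [hU.mem_nhds hx] with y hy
    simp only [h_def]
    rw [div_eq_inv_mul, mul_smul, huv y hy, inv_smul_smul₀ (hβ'0 y hy)]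
  have hderiv : Set.EqOn (fderiv ℝ h) 0 U := fun x hx => by
    have hU' := hU.mem_nhds hx
    have hhx := hh.differentiableAt hU'
    refine fderiv_eq_zero_of_grad_eq_zero (eq_zero_of_det_col2_eq_zero (hdet x hx) ?_ ?_)
    · exact det_col2_grad_eq_zero_of_grad_eq_smul (hu₁.contDiffAt hU') (hv₁.contDiffAt hU') hhx
        (hgrad h₁ x hx)
    · exact det_col2_grad_eq_zero_of_grad_eq_smul (hu₂.contDiffAt hU') (hv₂.contDiffAt hU') hhx
        (hgrad h₂ x hx)
  intro x hx
  have hconst : h x = h x₀ := hU.is_const_of_fderiv_eq_zero hUc hh hderiv hx hx₀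
  rwa [show h x₀ = 1 from (div_eq_one_iff_eq (hβ'0 x₀ hx₀)).mpr hβx₀,
    div_eq_one_iff_eq (hβ'0 x hx)] at hconst

theorem stmt0 (U : Set (Fin 2 → ℝ)) (hUopen : IsOpen U) (hUconn : IsConnected U)
    (β β' : (Fin 2 → ℝ) → ℝ)
    (hβC : ContDiffOn ℝ 1 β U) (hβ'C : ContDiffOn ℝ 1 β' U)
    (hβ'pos : ∀ x ∈ U, 0 < β' x)
    (γt γt' : (Fin 2 → ℝ) → Matrix (Fin 2) (Fin 2) ℝ)
    (hγtpd : ∀ x ∈ U, (γt x).PosDef) (hγt'pd : ∀ x ∈ U, (γt' x).PosDef)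
    (hγtdet : ∀ x ∈ U, (γt x).det = 1) (hγt'det : ∀ x ∈ U, (γt' x).det = 1)
    (u₁ u₂ u₃ u₄ v₁ v₂ v₃ v₄ : (Fin 2 → ℝ) → ℝ)
    (hu₁ : ContDiffOn ℝ 2 u₁ U) (hu₂ : ContDiffOn ℝ 2 u₂ U)
    (hu₃ : ContDiffOn ℝ 2 u₃ U) (hu₄ : ContDiffOn ℝ 2 u₄ U)
    (hv₁ : ContDiffOn ℝ 2 v₁ U) (hv₂ : ContDiffOn ℝ 2 v₂ U)
    (hv₃ : ContDiffOn ℝ 2 v₃ U) (hv₄ : ContDiffOn ℝ 2 v₄ U)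
    (H₁ H₂ H₃ H₄ : (Fin 2 → ℝ) → Fin 2 → ℝ)
    -- the common data `Hᵢ = γ∇uᵢ = γ'∇u'ᵢ` (hypothesis (i)):
    (hH₁ : ∀ x ∈ U, H₁ x = (β x • γt x).mulVec (grad u₁ x))
    (hH₂ : ∀ x ∈ U, H₂ x = (β x • γt x).mulVec (grad u₂ x))
    (hH₃ : ∀ x ∈ U, H₃ x = (β x • γt x).mulVec (grad u₃ x))
    (hH₄ : ∀ x ∈ U, H₄ x = (β x • γt x).mulVec (grad u₄ x))
    (hH₁' : ∀ x ∈ U, H₁ x = (β' x • γt' x).mulVec (grad v₁ x))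
    (hH₂' : ∀ x ∈ U, H₂ x = (β' x • γt' x).mulVec (grad v₂ x))
    (hH₃' : ∀ x ∈ U, H₃ x = (β' x • γt' x).mulVec (grad v₃ x))
    (hH₄' : ∀ x ∈ U, H₄ x = (β' x • γt' x).mulVec (grad v₄ x))
    -- hypothesis (ii): nondegeneracy of `[H₁, H₂]`:
    (hdet : ∀ x ∈ U, (col2 (H₁ x) (H₂ x)).det ≠ 0)
    -- hypothesis (iii): linear independence of the constraint matrices `M₁(x), M₂(x)`:
    (hMindep : ∀ x ∈ U,
      LinearIndependent ℝ ![constraintMat H₁ H₂ H₃ x, constraintMat H₁ H₂ H₄ x])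
    -- hypothesis (iv): agreement of the scalar parts at one point:
    (x₀ : Fin 2 → ℝ) (hx₀ : x₀ ∈ U) (hβx₀ : β x₀ = β' x₀) :
    ∀ x ∈ U, γt x = γt' x ∧ β x = β' x ∧ β x • γt x = β' x • γt' x := by
  have hsymm : ∀ x ∈ U, (γt x).IsSymm := fun x hx => (hγtpd x hx).isSymm
  have hsymm' : ∀ x ∈ U, (γt' x).IsSymm := fun x hx => (hγt'pd x hx).isSymm
  have hγ : ∀ x ∈ U, γt x = γt' x := fun x hx =>
    eq_of_trace_transpose_mul_eq_zero (hγtpd x hx) (hγt'pd x hx)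
      ((hγtdet x hx).trans (hγt'det x hx).symm) (isSymm_symPart _) (isSymm_symPart _)
      (hMindep x hx)
      (trace_transpose_mul_constraintMat_eq_zero hUopen hsymm hγtdet hu₁ hu₂ hu₃ hH₁ hH₂ hH₃ hdet hx)
      (trace_transpose_mul_constraintMat_eq_zero hUopen hsymm hγtdet hu₁ hu₂ hu₄ hH₁ hH₂ hH₄ hdet hx)
      (trace_transpose_mul_constraintMat_eq_zero hUopen hsymm' hγt'det hv₁ hv₂ hv₃ hH₁' hH₂' hH₃'
        hdet hx)
      (trace_transpose_mul_constraintMat_eq_zero hUopen hsymm' hγt'det hv₁ hv₂ hv₄ hH₁' hH₂' hH₄'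
        hdet hx)
  have hsmul_grad : ∀ {u v : (Fin 2 → ℝ) → ℝ} {H : (Fin 2 → ℝ) → Fin 2 → ℝ},
      (∀ x ∈ U, H x = (β x • γt x) *ᵥ grad u x) → (∀ x ∈ U, H x = (β' x • γt' x) *ᵥ grad v x) →
      ∀ x ∈ U, β x • grad u x = β' x • grad v x := fun hu hv x hx =>
    smul_eq_smul_of_smul_mulVec_eq (g := γt x) (by simp [hγtdet x hx])
      (by rw [← hu x hx, hv x hx, hγ x hx])
  have hdet_grad : ∀ x ∈ U, (col2 (grad u₁ x) (grad u₂ x)).det ≠ 0 := fun x hx =>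
    right_ne_zero_of_mul (by simpa only [hH₁ x hx, hH₂ x hx, det_col2_mulVec] using hdet x hx)
  have hβ : Set.EqOn β β' U :=
    eqOn_of_smul_grad_eq hUopen hUconn.isPreconnected (hβC.differentiableOn one_ne_zero)
      (hβ'C.differentiableOn one_ne_zero) (fun x hx => (hβ'pos x hx).ne') hu₁ hu₂ hv₁ hv₂
      hdet_grad (hsmul_grad hH₁ hH₁') (hsmul_grad hH₂ hH₂') hx₀ hβx₀
  exact fun x hx => ⟨hγ x hx, hβ hx, by rw [hγ x hx, hβ hx]⟩
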